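/- arXiv:2605.31414 — 2 statements merged into one kernel-verified Lean document; each statement's English description precedes it below -/
import Mathlib

section
/- Let d ≥ 1, S = {x ∈ ℝ^d : ‖x‖ = 1}, s(u,i) = ⟨u,i⟩, and fix τ > 0. On a probability space (Ω, ℱ, P), let (U, I) : Ω → S × S be a random positive pair, and let J₁, J₂, … : Ω → S be i.i.d. with common law ν and independent of (U, I). For M ≥ 1 define the InfoNCE loss L_CL(M) = −E[log( e^{s(U,I)/τ} / (e^{s(U,I)/τ} + Σ_{n=1}^M e^{s(U,J_n)/τ}) )], and define g(u) = ∫_S e^{s(u,j)/τ} dν(j). Then the normalized InfoNCE loss converges: lim_{M→∞} ( L_CL(M) − log M ) = −(1/τ) E[s(U,I)] + E[ log g(U) ]. -/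
/-!
Write `W_M = e^{s(U,I)/τ} + ∑_{n<M} e^{s(U,J_n)/τ}`. Since
`log (e^{s/τ} / W_M) = s/τ - log (W_M / M) - log M`, the normalized loss equals
`E[log (W_M / M)] - E[s(U,I)]/τ`. For a fixed `u`, the strong law of large numbers gives
`W_M / M → g(u)` almost surely; independence of `U` and the negatives makes this hold at `u = U`
itself. On the sphere every term lies in `[e^{-1/|τ|}, e^{1/|τ|}]`, so `log (W_M / M)` is uniformly
bounded and dominated convergence gives `E[log (W_M / M)] → E[log g(U)]`.
-/

open MeasureTheory ProbabilityTheory Real Filter Topology Finset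

section Averages

variable {a c C : ℝ} {x : ℕ → ℝ}

lemma add_sum_div_mem_Icc {M : ℕ} (hM : 1 ≤ M) (ha : a ∈ Set.Icc 0 C)
    (hx : ∀ n, x n ∈ Set.Icc c C) :
    (a + ∑ n ∈ range M, x n) / M ∈ Set.Icc c (2 * C) := by
  have hM' : (1 : ℝ) ≤ M := by exact_mod_cast hM
  have hlo : M * c ≤ ∑ n ∈ range M, x n := by
    simpa using card_nsmul_le_sum (range M) x c fun n _ => (hx n).1
  have hhi : ∑ n ∈ range M, x n ≤ M * C := by
    simpa using sum_le_card_nsmul (range M) x C fun n _ => (hx n).2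
  rw [Set.mem_Icc, le_div_iff₀ (by linarith), div_le_iff₀ (by linarith)]
  constructor <;> nlinarith [ha.1, ha.2]

lemma abs_log_add_sum_div_le {M : ℕ} (hM : 1 ≤ M) (hc : 0 < c) (ha : a ∈ Set.Icc 0 C)
    (hx : ∀ n, x n ∈ Set.Icc c C) :
    |log ((a + ∑ n ∈ range M, x n) / M)| ≤ |log c| + |log (2 * C)| := by
  obtain ⟨hlo, hhi⟩ := add_sum_div_mem_Icc hM ha hx
  have h₁ := log_le_log hc hlo
  have h₂ := log_le_log (hc.trans_le hlo) hhi
  rw [abs_le]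
  constructor <;> linarith [neg_abs_le (log c), le_abs_self (log (2 * C)),
    abs_nonneg (log c), abs_nonneg (log (2 * C))]

lemma tendsto_log_add_sum_div {L : ℝ} (hc : 0 < c) (hx : ∀ n, c ≤ x n)
    (h : Tendsto (fun M : ℕ => (M : ℝ)⁻¹ * ∑ n ∈ range M, x n) atTop (𝓝 L)) :
    Tendsto (fun M : ℕ => log ((a + ∑ n ∈ range M, x n) / M)) atTop (𝓝 (log L)) := by
  have hL : c ≤ L := ge_of_tendsto h <| (eventually_ge_atTop 1).mono fun M hM => by
    have hM' : (0 : ℝ) < M := by exact_mod_cast hM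
    rw [le_inv_mul_iff₀ hM']
    simpa [mul_comm] using card_nsmul_le_sum (range M) x c fun n _ => hx n
  have hsum : Tendsto (fun M : ℕ => (a + ∑ n ∈ range M, x n) / M) atTop (𝓝 L) := by
    have := (tendsto_const_div_atTop_nhds_zero_nat a).add h
    rw [zero_add] at this
    refine this.congr fun M => ?_
    rw [add_div, inv_mul_eq_div]
  exact ((continuousAt_log (hc.trans_le hL).ne').tendsto).comp hsum

end Averages

section StrongLaw

variable {Ω α β : Type*} [MeasurableSpace Ω] [MeasurableSpace α] [MeasurableSpace β]
  {P : Measure Ω} {ν : Measure β}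

lemma ae_of_indepFun_of_forall_ae [IsFiniteMeasure P] {X : Ω → α} {Y : Ω → β}
    (hX : Measurable X) (hY : Measurable Y) (hXY : IndepFun X Y P) {p : α × β → Prop}
    (hp : MeasurableSet {z | p z}) (h : ∀ x, ∀ᵐ ω ∂P, p (x, Y ω)) :
    ∀ᵐ ω ∂P, p (X ω, Y ω) := by
  have hmap : P.map (fun ω => (X ω, Y ω)) = (P.map X).prod (P.map Y) :=
    (indepFun_iff_map_prod_eq_prod_map_map hX.aemeasurable hY.aemeasurable).1 hXY
  have hprod : ∀ᵐ z ∂(P.map X).prod (P.map Y), p z := by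
    rw [Measure.ae_prod_iff_ae_ae hp]
    refine ae_of_all _ fun x => ?_
    exact (ae_map_iff hY.aemeasurable (hp.preimage measurable_prodMk_left)).2 (h x)
  rw [← hmap] at hprod
  exact (ae_map_iff (hX.aemeasurable.prodMk hY.aemeasurable) hp).1 hprod

variable {Y : ℕ → Ω → β}

lemma ae_tendsto_avg_of_pairwise_indepFun (hY : ∀ n, Measurable (Y n))
    (hlaw : ∀ n, P.map (Y n) = ν) (hpair : Pairwise fun i j => IndepFun (Y i) (Y j) P)
    {g : β → ℝ} (hg : Measurable g) (hgν : Integrable g ν) :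
    ∀ᵐ ω ∂P, Tendsto (fun M : ℕ => (M : ℝ)⁻¹ * ∑ n ∈ range M, g (Y n ω)) atTop
      (𝓝 (∫ y, g y ∂ν)) := by
  have hident : ∀ n, IdentDistrib (fun ω => g (Y n ω)) (fun ω => g (Y 0 ω)) P P := fun n =>
    (IdentDistrib.mk (hY n).aemeasurable (hY 0).aemeasurable (by rw [hlaw n, hlaw 0])).comp hg
  have hint : Integrable (fun ω => g (Y 0 ω)) P :=
    (hlaw 0 ▸ hgν : Integrable g (P.map (Y 0))).comp_measurable (hY 0)
  have hmean : ∫ ω, g (Y 0 ω) ∂P = ∫ y, g y ∂ν := by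
    rw [← hlaw 0, integral_map (hY 0).aemeasurable hg.aestronglyMeasurable]
  simpa [hmean] using strong_law_ae _ hint (fun i j hij => (hpair hij).comp hg hg) hident

variable {f : α → β → ℝ} {X : Ω → α}

lemma ae_tendsto_avg_of_indepFun [IsFiniteMeasure P] (hf : Measurable (Function.uncurry f))
    (hfν : ∀ x, Integrable (f x) ν) (hX : Measurable X) (hY : ∀ n, Measurable (Y n))
    (hlaw : ∀ n, P.map (Y n) = ν) (hpair : Pairwise fun i j => IndepFun (Y i) (Y j) P)
    (hindep : IndepFun X (fun ω n => Y n ω) P) :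
    ∀ᵐ ω ∂P, Tendsto (fun M : ℕ => (M : ℝ)⁻¹ * ∑ n ∈ range M, f (X ω) (Y n ω))
      atTop (𝓝 (∫ y, f (X ω) y ∂ν)) := by
  have : IsFiniteMeasure ν := hlaw 0 ▸ inferInstance
  have hlim : Measurable fun x => ∫ y, f x y ∂ν :=
    hf.stronglyMeasurable.integral_prod_right'.measurable
  set p : α × (ℕ → β) → Prop := fun z => Tendsto
    (fun M : ℕ => (M : ℝ)⁻¹ * ∑ n ∈ range M, f z.1 (z.2 n)) atTop
    (𝓝 (∫ y, f z.1 y ∂ν))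
  have hp : MeasurableSet {z | p z} :=
    measurableSet_tendsto_fun (fun M => measurable_const.mul <| Finset.measurable_sum _
      fun n _ => hf.comp (measurable_fst.prodMk ((measurable_pi_apply n).comp measurable_snd)))
      (hlim.comp measurable_fst)
  exact ae_of_indepFun_of_forall_ae hX (measurable_pi_lambda _ hY) hindep hp fun x =>
    (ae_tendsto_avg_of_pairwise_indepFun hY hlaw hpair (hf.comp measurable_prodMk_left) (hfν x) :)

variable {a : Ω → ℝ} {c C : ℝ}

lemma integrable_log_add_sum_div [IsFiniteMeasure P] {x : ℕ → Ω → ℝ}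
    (ha : AEMeasurable a P) (hx : ∀ n, AEMeasurable (x n) P) (hc : 0 < c)
    (haC : ∀ ω, a ω ∈ Set.Icc 0 C) (hxC : ∀ n ω, x n ω ∈ Set.Icc c C) {M : ℕ} (hM : 1 ≤ M) :
    Integrable (fun ω => log ((a ω + ∑ n ∈ range M, x n ω) / M)) P :=
  .of_bound (measurable_log.comp_aemeasurable
      ((ha.add (Finset.aemeasurable_fun_sum _ fun n _ => hx n)).div_const _)).aestronglyMeasurable
    _ (ae_of_all _ fun ω => abs_log_add_sum_div_le hM hc (haC ω) (hxC · ω))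

lemma tendsto_integral_log_add_sum_div [IsFiniteMeasure P] (hf : Measurable (Function.uncurry f))
    (hfν : ∀ x, Integrable (f x) ν) (hX : Measurable X) (hY : ∀ n, Measurable (Y n))
    (ha : AEMeasurable a P) (hlaw : ∀ n, P.map (Y n) = ν)
    (hpair : Pairwise fun i j => IndepFun (Y i) (Y j) P)
    (hindep : IndepFun X (fun ω n => Y n ω) P) (hc : 0 < c) (haC : ∀ ω, a ω ∈ Set.Icc 0 C)
    (hfC : ∀ n ω, f (X ω) (Y n ω) ∈ Set.Icc c C) :
    Tendsto (fun M : ℕ => ∫ ω, log ((a ω + ∑ n ∈ range M, f (X ω) (Y n ω)) / M) ∂P)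
      atTop (𝓝 (∫ ω, log (∫ y, f (X ω) y ∂ν) ∂P)) := by
  have hfY : ∀ n, AEMeasurable (fun ω => f (X ω) (Y n ω)) P := fun n =>
    (hf.comp (hX.prodMk (hY n))).aemeasurable
  refine tendsto_integral_filter_of_dominated_convergence (fun _ => |log c| + |log (2 * C)|)
    ?_ ?_ (integrable_const _) ?_
  · filter_upwards [eventually_ge_atTop 1] with M hM
    exact (integrable_log_add_sum_div ha hfY hc haC hfC hM).aestronglyMeasurable
  · filter_upwards [eventually_ge_atTop 1] with M hM
    exact ae_of_all _ fun ω => abs_log_add_sum_div_le hM hc (haC ω) (hfC · ω)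
  · filter_upwards [ae_tendsto_avg_of_indepFun hf hfν hX hY hlaw hpair hindep] with ω hω
    exact tendsto_log_add_sum_div hc (fun n => (hfC n ω).1) hω


theorem tendsto_neg_integral_log_exp_div_sub_log [IsProbabilityMeasure P] {b : Ω → ℝ}
    (hf : Measurable (Function.uncurry f)) (hfν : ∀ x, Integrable (f x) ν) (hX : Measurable X)
    (hY : ∀ n, Measurable (Y n)) (hb : Integrable b P) (hlaw : ∀ n, P.map (Y n) = ν)
    (hpair : Pairwise fun i j => IndepFun (Y i) (Y j) P)
    (hindep : IndepFun X (fun ω n => Y n ω) P) (hc : 0 < c) (hbC : ∀ ω, exp (b ω) ≤ C)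
    (hfC : ∀ n ω, f (X ω) (Y n ω) ∈ Set.Icc c C) :
    Tendsto (fun M : ℕ => -(∫ ω, log (exp (b ω) /
        (exp (b ω) + ∑ n ∈ range M, f (X ω) (Y n ω))) ∂P) - log M) atTop
      (𝓝 (-(∫ ω, b ω ∂P) + ∫ ω, log (∫ y, f (X ω) y ∂ν) ∂P)) := by
  set W : ℕ → Ω → ℝ := fun M ω => exp (b ω) + ∑ n ∈ range M, f (X ω) (Y n ω)
  have hexpb : ∀ ω, exp (b ω) ∈ Set.Icc 0 C := fun ω => ⟨(exp_pos _).le, hbC ω⟩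
  have hexpb_meas : AEMeasurable (fun ω => exp (b ω)) P :=
    measurable_exp.comp_aemeasurable hb.aemeasurable
  have hfY : ∀ n, AEMeasurable (fun ω => f (X ω) (Y n ω)) P := fun n =>
    (hf.comp (hX.prodMk (hY n))).aemeasurable
  have hloss : ∀ M : ℕ, 1 ≤ M → -(∫ ω, log (exp (b ω) / W M ω) ∂P) - log M
      = ∫ ω, log (W M ω / M) ∂P - ∫ ω, b ω ∂P := by
    intro M hM
    have hM' : (M : ℝ) ≠ 0 := by positivity
    have hW : ∀ ω, W M ω ≠ 0 := fun ω => (add_pos_of_pos_of_nonneg (exp_pos _)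
      (sum_nonneg fun n _ => (hc.trans_le (hfC n ω).1).le)).ne'
    have hlog : ∀ ω, log (exp (b ω) / W M ω) = b ω - log (W M ω / M) - log M := fun ω => by
      rw [log_div (exp_ne_zero _) (hW ω), log_exp, log_div (hW ω) hM']
      ring
    have hWint : Integrable (fun ω => log (W M ω / M)) P :=
      integrable_log_add_sum_div hexpb_meas hfY hc hexpb hfC hM
    simp_rw [hlog]
    rw [integral_sub (f := fun ω => b ω - log (W M ω / M)) (hb.sub hWint) (integrable_const _),
      integral_sub hb hWint, integral_const, probReal_univ, one_smul]
    ring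
  rw [neg_add_eq_sub]
  refine ((tendsto_integral_log_add_sum_div hf hfν hX hY hexpb_meas hlaw hpair hindep hc hexpb
    hfC).sub_const _).congr' ?_
  filter_upwards [eventually_ge_atTop 1] with M hM using (hloss M hM).symm

end StrongLaw

section Sphere

variable {E : Type*} [NormedAddCommGroup E] [InnerProductSpace ℝ E]

lemma abs_inner_div_le (u j : E) (τ : ℝ) : |inner ℝ u j / τ| ≤ ‖u‖ * ‖j‖ / |τ| := by
  rw [abs_div]
  exact div_le_div_of_nonneg_right (abs_real_inner_le_norm u j) (abs_nonneg τ)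

lemma exp_inner_div_mem_Icc {u j : E} (hu : ‖u‖ = 1) (hj : ‖j‖ = 1) (τ : ℝ) :
    exp (inner ℝ u j / τ) ∈ Set.Icc (exp (-|τ|⁻¹)) (exp |τ|⁻¹) := by
  have h := abs_le.1 ((abs_inner_div_le u j τ).trans_eq (by rw [hu, hj, one_mul, one_div]))
  exact ⟨exp_le_exp.2 h.1, exp_le_exp.2 h.2⟩

end Sphere

theorem normalized_infoNCE_tendsto_alignment_uniformity_general
    (d : ℕ) (τ : ℝ)
    {Ω : Type*} [MeasurableSpace Ω] (P : Measure Ω) [IsProbabilityMeasure P]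
    (U I : Ω → EuclideanSpace ℝ (Fin d)) (J : ℕ → Ω → EuclideanSpace ℝ (Fin d))
    (hUm : Measurable U) (hIm : Measurable I) (hJm : ∀ n, Measurable (J n))
    (hU : ∀ ω, ‖U ω‖ = 1) (hI : ∀ ω, ‖I ω‖ = 1) (hJ : ∀ n ω, ‖J n ω‖ = 1)
    (ν : Measure (EuclideanSpace ℝ (Fin d)))
    (hlaw : ∀ n, P.map (J n) = ν)
    (hiid : iIndepFun J P)
    (hindep : IndepFun (fun ω => (U ω, I ω)) (fun ω => (fun n => J n ω)) P) :
    Tendsto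
      (fun M : ℕ =>
        -(∫ ω, log (exp ((inner ℝ (U ω) (I ω) : ℝ) / τ) /
            (exp ((inner ℝ (U ω) (I ω) : ℝ) / τ)
              + ∑ n ∈ Finset.range M, exp ((inner ℝ (U ω) (J n ω) : ℝ) / τ))) ∂P)
          - log M)
      atTop
      (nhds (-(1 / τ) * (∫ ω, (inner ℝ (U ω) (I ω) : ℝ) ∂P)
        + ∫ ω, log (∫ j, exp ((inner ℝ (U ω) j : ℝ) / τ) ∂ν) ∂P)) := by
  set k : EuclideanSpace ℝ (Fin d) → EuclideanSpace ℝ (Fin d) → ℝ :=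
    fun u j => exp (inner ℝ u j / τ)
  have hk : Measurable (Function.uncurry k) :=
    (continuous_exp.comp (continuous_inner.div_const τ)).measurable
  have hkν : ∀ u, Integrable (k u) ν := fun u => by
    rw [← hlaw 0]
    refine (integrable_map_measure (hk.comp measurable_prodMk_left).aestronglyMeasurable
      (hJm 0).aemeasurable).2 <| .of_bound
        (hk.comp (measurable_const.prodMk (hJm 0))).aestronglyMeasurable (exp (‖u‖ / |τ|))
        (ae_of_all _ fun ω => ?_)
    have h := (abs_le.1 (abs_inner_div_le u (J 0 ω) τ)).2
    rw [hJ 0 ω, mul_one] at h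
    simpa [k, abs_of_pos (exp_pos _)] using h
  have hs : Integrable (fun ω => inner ℝ (U ω) (I ω) / τ) P :=
    .of_bound ((hUm.inner hIm).div_const τ).aestronglyMeasurable |τ|⁻¹ (ae_of_all _ fun ω => by
      rw [Real.norm_eq_abs]
      exact (abs_inner_div_le (U ω) (I ω) τ).trans_eq (by rw [hU ω, hI ω, one_mul, one_div]))
  have h := tendsto_neg_integral_log_exp_div_sub_log hk hkν hUm hJm hs hlaw
    (fun i j hij => hiid.indepFun hij) (hindep.comp measurable_fst measurable_id) (exp_pos _)
    (fun ω => (exp_inner_div_mem_Icc (hU ω) (hI ω) τ).2)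
    (fun n ω => exp_inner_div_mem_Icc (hU ω) (hJ n ω) τ)
  convert h using 3
  rw [integral_div]
  ring

/-- Theorem 1 of the paper: the normalized InfoNCE loss L_CL(M) − log M
converges, as the number M of i.i.d. negative samples tends to infinity, to the
alignment term −(1/τ)E[s(U,I)] plus E[log g(U)], where g(u) = ∫ e^{s(u,j)/τ} dν(j). -/
theorem normalized_infoNCE_tendsto_alignment_uniformity
    (d : ℕ) (hd : 1 ≤ d) (τ : ℝ) (hτ : 0 < τ)
    {Ω : Type*} [MeasurableSpace Ω] (P : Measure Ω) [IsProbabilityMeasure P]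
    (U I : Ω → EuclideanSpace ℝ (Fin d)) (J : ℕ → Ω → EuclideanSpace ℝ (Fin d))
    (hUm : Measurable U) (hIm : Measurable I) (hJm : ∀ n, Measurable (J n))
    (hU : ∀ ω, ‖U ω‖ = 1) (hI : ∀ ω, ‖I ω‖ = 1) (hJ : ∀ n ω, ‖J n ω‖ = 1)
    (ν : Measure (EuclideanSpace ℝ (Fin d))) [IsProbabilityMeasure ν]
    (hlaw : ∀ n, P.map (J n) = ν)
    (hiid : iIndepFun J P)
    (hindep : IndepFun (fun ω => (U ω, I ω)) (fun ω => (fun n => J n ω)) P) :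
    Tendsto
      (fun M : ℕ =>
        -(∫ ω, log (exp ((inner ℝ (U ω) (I ω) : ℝ) / τ) /
            (exp ((inner ℝ (U ω) (I ω) : ℝ) / τ)
              + ∑ n ∈ Finset.range M, exp ((inner ℝ (U ω) (J n ω) : ℝ) / τ))) ∂P)
          - log M)
      atTop
      (nhds (-(1 / τ) * (∫ ω, (inner ℝ (U ω) (I ω) : ℝ) ∂P)
        + ∫ ω, log (∫ j, exp ((inner ℝ (U ω) j : ℝ) / τ) ∂ν) ∂P)) :=
  normalized_infoNCE_tendsto_alignment_uniformity_general d τ P U I J hUm hIm hJm hU hI hJ ν hlaw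
    hiid hindep
end

section
/- Let d ≥ 1, S = {x ∈ ℝ^d : ‖x‖ = 1}, s(u,i) = ⟨u,i⟩, and fix τ > 0. On a probability space (Ω, ℱ, P), let (U, I) : Ω → S × S be a random positive pair, and let J₁, J₂, … : Ω → S be i.i.d. with common law ν and independent of (U, I). For M ≥ 1 define the normalized InfoNCE loss L̃(M) = −E[log( e^{s(U,I)/τ} / (e^{s(U,I)/τ} + Σ_{n=1}^M e^{s(U,J_n)/τ}) )] − log M, and let L̃(∞) = −(1/τ) E[s(U,I)] + E[log g(U)] where g(u) = ∫_S e^{s(u,j)/τ} dν(j). Then for every M ≥ 1: | L̃(∞) − L̃(M) | ≤ (1/M) e^{2/τ} + e^{1/τ} (e^{1/τ} − e^{−1/τ}) / (2√M). -/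
/-!
The gap `L̃(∞) - L̃(M)` is `E[log g(U) - log ((e^{s(U,I)/τ} + ∑ₙ e^{s(U,Jₙ)/τ}) / M)]`. All
exponentiated similarities lie in `[c⁻¹, c]` with `c = e^{1/τ}`, where `log` is `c`-Lipschitz, so
the integrand is at most `c² / M` (the positive pair) plus `c` times the deviation of the empirical
mean of the negatives from `g(U)`. Conditionally on `U`, the centred negative terms are i.i.d. with
mean zero and, by Popoviciu's inequality, variance at most `((c - c⁻¹) / 2)²`; hence the deviation
has `L²` norm, and so `L¹` norm, at most `(c - c⁻¹) / (2 √M)`.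
-/

open MeasureTheory ProbabilityTheory Real
open Set Finset Function

theorem sum_range_div_sub_eq (x : ℕ → ℝ) (y : ℝ) {M : ℕ} (hM : M ≠ 0) :
    (∑ n ∈ range M, x n) / M - y = (∑ n ∈ range M, (x n - y)) / M := by
  rw [sum_sub_distrib, sum_const, card_range, nsmul_eq_mul]
  field_simp

theorem sum_range_mem_Icc {x : ℕ → ℝ} {a b : ℝ} (M : ℕ) (h : ∀ n, x n ∈ Icc a b) :
    ∑ n ∈ range M, x n ∈ Icc (M * a) (M * b) :=
  ⟨by simpa using card_nsmul_le_sum (range M) x a fun n _ => (h n).1,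
    by simpa using sum_le_card_nsmul (range M) x b fun n _ => (h n).2⟩

theorem abs_log_sub_log_le_div {ε p q : ℝ} (hε : 0 < ε) (hp : ε ≤ p) (hq : ε ≤ q) :
    |log p - log q| ≤ |p - q| / ε := by
  have key : ∀ x y : ℝ, ε ≤ x → ε ≤ y → log x - log y ≤ |x - y| / ε := by
    intro x y hx hy
    have hy0 : 0 < y := hε.trans_le hy
    calc log x - log y = log (x / y) := (log_div (hε.trans_le hx).ne' hy0.ne').symm
      _ ≤ x / y - 1 := log_le_sub_one_of_pos (div_pos (hε.trans_le hx) hy0)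
      _ = (x - y) / y := by field_simp
      _ ≤ |x - y| / ε := by gcongr; exact le_abs_self _
  exact abs_sub_le_iff.mpr ⟨key p q hp hq, abs_sub_comm p q ▸ key q p hq hp⟩

theorem abs_log_sub_log_add_div_le {c g x t M : ℝ} (hc : 0 < c) (hM : 0 < M) (hg : c⁻¹ ≤ g)
    (ht : c⁻¹ ≤ t / M) (hx : 0 ≤ x) (hxc : x ≤ c) :
    |log g - log ((x + t) / M)| ≤ 1 / M * (c * c) + c * |t / M - g| := by
  have hxM : 0 ≤ x / M := div_nonneg hx hM.le
  have hsub : |g - (x / M + t / M)| ≤ x / M + |t / M - g| := by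
    rw [abs_le]
    constructor <;> linarith [le_abs_self (t / M - g), neg_abs_le (t / M - g)]
  rw [add_div]
  calc |log g - log (x / M + t / M)| ≤ |g - (x / M + t / M)| / c⁻¹ :=
        abs_log_sub_log_le_div (inv_pos.2 hc) hg (by linarith)
    _ ≤ (c / M + |t / M - g|) * c := by
        rw [div_inv_eq_mul]
        gcongr
        linarith [div_le_div_of_nonneg_right hxc hM.le]
    _ = 1 / M * (c * c) + c * |t / M - g| := by ring

theorem exp_div_mem_Icc {τ s : ℝ} (hτ : 0 < τ) (hs : s ∈ Icc (-1 : ℝ) 1) :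
    exp (s / τ) ∈ Icc (exp (-(1 / τ))) (exp (1 / τ)) := by
  rw [← neg_div]
  exact ⟨by gcongr; exact hs.1, by gcongr; exact hs.2⟩

theorem integrable_log_of_mem_Icc {α : Type*} [MeasurableSpace α] {μ : Measure α}
    [IsFiniteMeasure μ] {X : α → ℝ} (hX : AEMeasurable X μ) {a b : ℝ} (ha : 0 < a)
    (h : ∀ᵐ x ∂μ, X x ∈ Icc a b) : Integrable (fun x => log (X x)) μ :=
  .of_mem_Icc (log a) (log b) (measurable_log.comp_aemeasurable hX)
    (h.mono fun _ hx => ⟨log_le_log ha hx.1, log_le_log (ha.trans_le hx.1) hx.2⟩)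

theorem integral_abs_le_sqrt_integral_sq {α : Type*} [MeasurableSpace α] {μ : Measure α}
    [IsProbabilityMeasure μ] {X : α → ℝ} (hX : MemLp X 2 μ) :
    ∫ x, |X x| ∂μ ≤ √(∫ x, X x ^ 2 ∂μ) := by
  have hsq : (∫ x, |X x| ∂μ) ^ 2 ≤ ∫ x, X x ^ 2 ∂μ := by
    have h := variance_eq_sub hX.abs
    simp only [Pi.pow_apply, Pi.abs_apply, sq_abs] at h
    linarith [variance_nonneg |X| μ]
  exact (le_abs_self _).trans (abs_le_sqrt hsq)

theorem abs_integral_le_add_mul_integral_abs {α : Type*} [MeasurableSpace α] {μ : Measure α}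
    [IsProbabilityMeasure μ] {D Δ : α → ℝ} {k c : ℝ} (hΔ : Integrable Δ μ)
    (hD : ∀ᵐ x ∂μ, |D x| ≤ k + c * |Δ x|) :
    |∫ x, D x ∂μ| ≤ k + c * ∫ x, |Δ x| ∂μ := by
  calc |∫ x, D x ∂μ| ≤ ∫ x, |D x| ∂μ := abs_integral_le_integral_abs
    _ ≤ ∫ x, (k + c * |Δ x|) ∂μ :=
        integral_mono_of_nonneg (.of_forall fun _ => abs_nonneg _)
          ((integrable_const k).add (hΔ.abs.const_mul c)) hD
    _ = k + c * ∫ x, |Δ x| ∂μ := by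
        rw [integral_add (integrable_const k) (hΔ.abs.const_mul c), integral_const_mul]
        simp

namespace ProbabilityTheory

variable {Ω E F : Type*} [MeasurableSpace Ω] [MeasurableSpace E] [MeasurableSpace F]
  {P : Measure Ω} {V : Ω → E} {W : Ω → F} {f : E → F → ℝ} {a b : ℝ}

theorem IndepFun.integral_comp_eq_integral_integral [IsFiniteMeasure P]
    (hVW : IndepFun V W P) (hV : Measurable V) (hW : Measurable W) (hf : Measurable (uncurry f))
    (hint : Integrable (fun ω => f (V ω) (W ω)) P) :
    ∫ ω, f (V ω) (W ω) ∂P = ∫ u, ∫ w, f u w ∂(P.map W) ∂(P.map V) := by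
  have hlaw : P.map (fun ω => (V ω, W ω)) = (P.map V).prod (P.map W) :=
    (indepFun_iff_map_prod_eq_prod_map_map hV.aemeasurable hW.aemeasurable).mp hVW
  have hint' : Integrable (uncurry f) ((P.map V).prod (P.map W)) := by
    rw [← hlaw]
    exact (integrable_map_measure hf.aestronglyMeasurable (hV.prodMk hW).aemeasurable).mpr hint
  calc ∫ ω, f (V ω) (W ω) ∂P = ∫ p, uncurry f p ∂P.map (fun ω => (V ω, W ω)) :=
        (integral_map (hV.prodMk hW).aemeasurable hf.aestronglyMeasurable).symm
    _ = ∫ u, ∫ w, f u w ∂(P.map W) ∂(P.map V) := by rw [hlaw, integral_prod _ hint']; rfl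

theorem IndepFun.ae_ae_mem_Icc [IsFiniteMeasure P]
    (hVW : IndepFun V W P) (hV : Measurable V) (hW : Measurable W) (hf : Measurable (uncurry f))
    (hab : ∀ ω, f (V ω) (W ω) ∈ Icc a b) :
    ∀ᵐ u ∂P.map V, ∀ᵐ w ∂P.map W, f u w ∈ Icc a b := by
  have hlaw : P.map (fun ω => (V ω, W ω)) = (P.map V).prod (P.map W) :=
    (indepFun_iff_map_prod_eq_prod_map_map hV.aemeasurable hW.aemeasurable).mp hVW
  refine Measure.ae_ae_of_ae_prod (p := fun p => f p.1 p.2 ∈ Icc a b) ?_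
  rw [← hlaw]
  exact (ae_map_iff (hV.prodMk hW).aemeasurable (hf measurableSet_Icc)).mpr (.of_forall hab)

theorem IndepFun.ae_integral_mem_Icc [IsProbabilityMeasure P]
    (hVW : IndepFun V W P) (hV : Measurable V) (hW : Measurable W) (hf : Measurable (uncurry f))
    (hab : ∀ ω, f (V ω) (W ω) ∈ Icc a b) :
    ∀ᵐ ω ∂P, ∫ w, f (V ω) w ∂(P.map W) ∈ Icc a b := by
  refine ae_of_ae_map (p := fun u => ∫ w, f u w ∂(P.map W) ∈ Icc a b) hV.aemeasurable ?_
  filter_upwards [hVW.ae_ae_mem_Icc hV hW hf hab] with u hu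
  have := Measure.isProbabilityMeasure_map (μ := P) hW.aemeasurable
  have hfu : Measurable (f u) := hf.comp (measurable_const.prodMk measurable_id)
  exact (convex_Icc a b).integral_mem isClosed_Icc hu (.of_mem_Icc a b hfu.aemeasurable hu)

theorem IndepFun.memLp_top_sub_integral [IsProbabilityMeasure P]
    (hVW : IndepFun V W P) (hV : Measurable V) (hW : Measurable W) (hf : Measurable (uncurry f))
    (hab : ∀ ω, f (V ω) (W ω) ∈ Icc a b) :
    MemLp (fun ω => f (V ω) (W ω) - ∫ w, f (V ω) w ∂(P.map W)) ⊤ P := by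
  have hg : Measurable fun u => ∫ w, f u w ∂(P.map W) :=
    (hf.stronglyMeasurable.integral_prod_right).measurable
  refine memLp_top_of_bound ((hf.comp (hV.prodMk hW)).sub (hg.comp hV)).aestronglyMeasurable
    (b - a) ?_
  filter_upwards [hVW.ae_integral_mem_Icc hV hW hf hab] with ω hω
  rw [Real.norm_eq_abs, abs_le]
  constructor <;> linarith [(hab ω).1, (hab ω).2, hω.1, hω.2]

theorem IndepFun.integral_sub_integral_sq_le [IsProbabilityMeasure P]
    (hVW : IndepFun V W P) (hV : Measurable V) (hW : Measurable W) (hf : Measurable (uncurry f))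
    (hab : ∀ ω, f (V ω) (W ω) ∈ Icc a b) :
    ∫ ω, (f (V ω) (W ω) - ∫ w, f (V ω) w ∂(P.map W)) ^ 2 ∂P ≤ ((b - a) / 2) ^ 2 := by
  have := Measure.isProbabilityMeasure_map (μ := P) hV.aemeasurable
  have := Measure.isProbabilityMeasure_map (μ := P) hW.aemeasurable
  have hg : Measurable fun u => ∫ w, f u w ∂(P.map W) :=
    (hf.stronglyMeasurable.integral_prod_right).measurable
  rw [hVW.integral_comp_eq_integral_integral
    (f := fun u w => (f u w - ∫ w, f u w ∂(P.map W)) ^ 2) hV hW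
    ((hf.sub (hg.comp measurable_fst)).pow_const 2)
    ((hVW.memLp_top_sub_integral hV hW hf hab).mono_exponent le_top).integrable_sq]
  calc _ ≤ ∫ _u, ((b - a) / 2) ^ 2 ∂P.map V := by
        refine integral_mono_of_nonneg (.of_forall fun _ => integral_nonneg fun _ => sq_nonneg _)
          (integrable_const _) ?_
        filter_upwards [hVW.ae_ae_mem_Icc hV hW hf hab] with u hu
        have hfu : Measurable (f u) := hf.comp (measurable_const.prodMk measurable_id)
        rw [← variance_eq_integral hfu.aemeasurable]
        exact variance_le_sq_of_bounded hu hfu.aemeasurable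
    _ = ((b - a) / 2) ^ 2 := by simp

theorem integral_sub_integral_mul_sub_integral_eq_zero [IsProbabilityMeasure P]
    {ν : Measure F} [IsProbabilityMeasure ν]
    {W₁ W₂ : Ω → F} (hV : Measurable V) (hW₁ : Measurable W₁) (hW₂ : Measurable W₂)
    (hVW : IndepFun V (fun ω => (W₁ ω, W₂ ω)) P) (hW : IndepFun W₁ W₂ P)
    (hlaw₁ : P.map W₁ = ν) (hlaw₂ : P.map W₂ = ν) (hf : Measurable (uncurry f))
    (hab₁ : ∀ ω, f (V ω) (W₁ ω) ∈ Icc a b) (hab₂ : ∀ ω, f (V ω) (W₂ ω) ∈ Icc a b) :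
    ∫ ω, (f (V ω) (W₁ ω) - ∫ w, f (V ω) w ∂ν) * (f (V ω) (W₂ ω) - ∫ w, f (V ω) w ∂ν) ∂P
      = 0 := by
  have hg : Measurable fun u => ∫ w, f u w ∂ν :=
    (hf.stronglyMeasurable.integral_prod_right).measurable
  have hlaw : P.map (fun ω => (W₁ ω, W₂ ω)) = ν.prod ν := by
    rw [(indepFun_iff_map_prod_eq_prod_map_map hW₁.aemeasurable hW₂.aemeasurable).mp hW,
      hlaw₁, hlaw₂]
  have hVW₁ : IndepFun V W₁ P := hVW.comp measurable_id measurable_fst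
  have hVW₂ : IndepFun V W₂ P := hVW.comp measurable_id measurable_snd
  have hmemLp₁ : MemLp (fun ω => f (V ω) (W₁ ω) - ∫ w, f (V ω) w ∂ν) ⊤ P :=
    hlaw₁ ▸ hVW₁.memLp_top_sub_integral hV hW₁ hf hab₁
  have hmemLp₂ : MemLp (fun ω => f (V ω) (W₂ ω) - ∫ w, f (V ω) w ∂ν) ⊤ P :=
    hlaw₂ ▸ hVW₂.memLp_top_sub_integral hV hW₂ hf hab₂
  rw [hVW.integral_comp_eq_integral_integral
    (f := fun u (q : F × F) => (f u q.1 - ∫ w, f u w ∂ν) * (f u q.2 - ∫ w, f u w ∂ν))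
    hV (hW₁.prodMk hW₂)
    (((hf.comp (measurable_fst.prodMk (measurable_fst.comp measurable_snd))).sub
      (hg.comp measurable_fst)).mul
      ((hf.comp (measurable_fst.prodMk (measurable_snd.comp measurable_snd))).sub
      (hg.comp measurable_fst)))
    ((hmemLp₂.mul hmemLp₁ (r := ⊤)).integrable le_top), hlaw]
  refine integral_eq_zero_of_ae (.of_forall fun u => ?_)
  have hcentered : ∫ w, (f u w - ∫ w, f u w ∂ν) ∂ν = 0 := by
    simpa [average_eq_integral] using integral_sub_average ν (f u)
  simp only [Pi.zero_apply]
  rw [integral_prod_mul (fun w => f u w - ∫ w, f u w ∂ν) (fun w => f u w - ∫ w, f u w ∂ν),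
    hcentered, zero_mul]

variable {ν : Measure F} {J : ℕ → Ω → F}

theorem integral_sq_sum_sub_integral_le [IsProbabilityMeasure P] [IsProbabilityMeasure ν]
    (hV : Measurable V) (hJ : ∀ n, Measurable (J n))
    (hlaw : ∀ n, P.map (J n) = ν) (hiid : iIndepFun J P)
    (hindep : IndepFun V (fun ω n => J n ω) P) (hf : Measurable (uncurry f))
    (hab : ∀ n ω, f (V ω) (J n ω) ∈ Icc a b) (s : Finset ℕ) :
    ∫ ω, (∑ n ∈ s, (f (V ω) (J n ω) - ∫ w, f (V ω) w ∂ν)) ^ 2 ∂P ≤ #s * ((b - a) / 2) ^ 2 := by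
  set Z : ℕ → Ω → ℝ := fun n ω => f (V ω) (J n ω) - ∫ w, f (V ω) w ∂ν
  have hVJ : ∀ n, IndepFun V (J n) P := fun n =>
    hindep.comp measurable_id (measurable_pi_apply n)
  have hZ : ∀ n, MemLp (Z n) ⊤ P := fun n => by
    simpa only [hlaw n] using (hVJ n).memLp_top_sub_integral hV (hJ n) hf (hab n)
  have hZZ : ∀ m n, Integrable (fun ω => Z m ω * Z n ω) P := fun m n =>
    ((hZ n).mul (hZ m) (r := ⊤)).integrable le_top
  have hdiag : ∀ n, ∫ ω, Z n ω * Z n ω ∂P ≤ ((b - a) / 2) ^ 2 := fun n => by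
    simpa only [← sq, hlaw n] using (hVJ n).integral_sub_integral_sq_le hV (hJ n) hf (hab n)
  have hcross : ∀ m n, m ≠ n → ∫ ω, Z m ω * Z n ω ∂P = 0 := fun m n hmn =>
    integral_sub_integral_mul_sub_integral_eq_zero hV (hJ m) (hJ n)
      (hindep.comp measurable_id ((measurable_pi_apply m).prodMk (measurable_pi_apply n)))
      (hiid.indepFun hmn) (hlaw m) (hlaw n) hf (hab m) (hab n)
  calc ∫ ω, (∑ n ∈ s, Z n ω) ^ 2 ∂P = ∑ m ∈ s, ∑ n ∈ s, ∫ ω, Z m ω * Z n ω ∂P := by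
        simp_rw [sq, sum_mul_sum]
        rw [integral_finsetSum _ fun m _ => integrable_finsetSum _ fun n _ => hZZ m n]
        exact sum_congr rfl fun m _ => integral_finsetSum _ fun n _ => hZZ m n
    _ = ∑ m ∈ s, ∫ ω, Z m ω * Z m ω ∂P :=
        sum_congr rfl fun m hm => sum_eq_single_of_mem m hm fun n _ hnm => hcross m n hnm.symm
    _ ≤ ∑ _m ∈ s, ((b - a) / 2) ^ 2 := sum_le_sum fun m _ => hdiag m
    _ = #s * ((b - a) / 2) ^ 2 := by simp

theorem memLp_top_sum_sub_integral [IsProbabilityMeasure P]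
    (hV : Measurable V) (hJ : ∀ n, Measurable (J n))
    (hlaw : ∀ n, P.map (J n) = ν) (hindep : IndepFun V (fun ω n => J n ω) P)
    (hf : Measurable (uncurry f)) (hab : ∀ n ω, f (V ω) (J n ω) ∈ Icc a b) (s : Finset ℕ) :
    MemLp (fun ω => ∑ n ∈ s, (f (V ω) (J n ω) - ∫ w, f (V ω) w ∂ν)) ⊤ P := by
  refine memLp_finsetSum s (f := fun n ω => f (V ω) (J n ω) - ∫ w, f (V ω) w ∂ν)
    fun n _ => ?_
  have hVJ : IndepFun V (J n) P := hindep.comp measurable_id (measurable_pi_apply n)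
  simpa only [hlaw n] using hVJ.memLp_top_sub_integral hV (hJ n) hf (hab n)

theorem integrable_sum_div_sub_integral [IsProbabilityMeasure P]
    (hV : Measurable V) (hJ : ∀ n, Measurable (J n))
    (hlaw : ∀ n, P.map (J n) = ν) (hindep : IndepFun V (fun ω n => J n ω) P)
    (hf : Measurable (uncurry f)) (hab : ∀ n ω, f (V ω) (J n ω) ∈ Icc a b) {M : ℕ}
    (hM : M ≠ 0) :
    Integrable (fun ω => (∑ n ∈ range M, f (V ω) (J n ω)) / M - ∫ w, f (V ω) w ∂ν) P := by
  simp_rw [sum_range_div_sub_eq _ _ hM]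
  exact ((memLp_top_sum_sub_integral hV hJ hlaw hindep hf hab _).integrable le_top).div_const _

theorem integral_abs_sum_div_sub_integral_le [IsProbabilityMeasure P] [IsProbabilityMeasure ν]
    (hV : Measurable V) (hJ : ∀ n, Measurable (J n))
    (hlaw : ∀ n, P.map (J n) = ν) (hiid : iIndepFun J P)
    (hindep : IndepFun V (fun ω n => J n ω) P) (hf : Measurable (uncurry f))
    (hab : ∀ n ω, f (V ω) (J n ω) ∈ Icc a b) {M : ℕ} (hM : M ≠ 0) :
    ∫ ω, |(∑ n ∈ range M, f (V ω) (J n ω)) / M - ∫ w, f (V ω) w ∂ν| ∂P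
      ≤ (b - a) / (2 * √M) := by
  obtain ⟨ω₀⟩ := nonempty_of_isProbabilityMeasure P
  have hab' : 0 ≤ (b - a) / 2 := by linarith [(hab 0 ω₀).1, (hab 0 ω₀).2]
  have hM' : (0 : ℝ) < M := by positivity
  simp_rw [sum_range_div_sub_eq _ _ hM, abs_div, Nat.abs_cast, integral_div]
  calc (∫ ω, |∑ n ∈ range M, (f (V ω) (J n ω) - ∫ w, f (V ω) w ∂ν)| ∂P) / M
      ≤ √(M * ((b - a) / 2) ^ 2) / M := by
        gcongr
        refine (integral_abs_le_sqrt_integral_sq ?_).trans (sqrt_le_sqrt ?_)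
        · exact (memLp_top_sum_sub_integral hV hJ hlaw hindep hf hab _).mono_exponent le_top
        · simpa using integral_sq_sum_sub_integral_le hV hJ hlaw hiid hindep hf hab (range M)
    _ = (b - a) / (2 * √M) := by
        rw [sqrt_mul hM'.le, sqrt_sq hab']
        field_simp
        rw [sq_sqrt hM'.le, mul_comm]

end ProbabilityTheory

theorem infoNCE_gap_eq_integral {Ω : Type*} [MeasurableSpace Ω] {P : Measure Ω}
    [IsProbabilityMeasure P] {σ G T : Ω → ℝ} {τ m : ℝ} (hσ : Integrable σ P)
    (hG : Integrable (fun ω => log (G ω)) P)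
    (hT : Integrable (fun ω => log (exp (σ ω / τ) + T ω)) P) (hT0 : ∀ ω, 0 ≤ T ω)
    (hm : m ≠ 0) :
    (-(1 / τ) * (∫ ω, σ ω ∂P) + ∫ ω, log (G ω) ∂P)
      - (-(∫ ω, log (exp (σ ω / τ) / (exp (σ ω / τ) + T ω)) ∂P) - log m)
      = ∫ ω, (log (G ω) - log ((exp (σ ω / τ) + T ω) / m)) ∂P := by
  have hpos : ∀ ω, exp (σ ω / τ) + T ω ≠ 0 := fun ω =>
    (add_pos_of_pos_of_nonneg (exp_pos _) (hT0 ω)).ne'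
  have hlogit : ∀ ω, log (exp (σ ω / τ) / (exp (σ ω / τ) + T ω))
      = σ ω / τ - log (exp (σ ω / τ) + T ω) := fun ω => by
    rw [log_div (exp_pos _).ne' (hpos ω), log_exp]
  have hnormalized : ∀ ω, log (G ω) - log ((exp (σ ω / τ) + T ω) / m)
      = log (G ω) - log (exp (σ ω / τ) + T ω) + log m := fun ω => by
    rw [log_div (hpos ω) hm]; ring
  simp_rw [hlogit, hnormalized]
  rw [integral_sub (hσ.div_const τ) hT,
    integral_add (f := fun ω => log (G ω) - log (exp (σ ω / τ) + T ω)) (hG.sub hT)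
      (integrable_const _),
    integral_sub hG hT, integral_div, integral_const]
  simp only [probReal_univ, one_smul]
  ring

theorem abs_infoNCE_gap_le {Ω : Type*} [MeasurableSpace Ω] {P : Measure Ω}
    [IsProbabilityMeasure P] {σ G T : Ω → ℝ} {τ m : ℝ} (hτ : 0 < τ) (hm : 0 < m)
    (hσm : Measurable σ) (hσ : ∀ ω, σ ω ∈ Icc (-1 : ℝ) 1)
    (hGm : Measurable G) (hG : ∀ᵐ ω ∂P, G ω ∈ Icc (exp (-(1 / τ))) (exp (1 / τ)))
    (hTm : Measurable T) (hT : ∀ ω, T ω ∈ Icc (m * exp (-(1 / τ))) (m * exp (1 / τ)))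
    (hΔ : Integrable (fun ω => T ω / m - G ω) P) :
    |(-(1 / τ) * (∫ ω, σ ω ∂P) + ∫ ω, log (G ω) ∂P)
      - (-(∫ ω, log (exp (σ ω / τ) / (exp (σ ω / τ) + T ω)) ∂P) - log m)|
      ≤ 1 / m * exp (2 / τ) + exp (1 / τ) * ∫ ω, |T ω / m - G ω| ∂P := by
  set c := exp (1 / τ)
  have hc : 0 < c := exp_pos _
  have hce : exp (-(1 / τ)) = c⁻¹ := exp_neg _
  have hc2 : exp (2 / τ) = c * c := by rw [← exp_add]; ring_nf
  have hpos : ∀ ω, exp (σ ω / τ) ∈ Icc c⁻¹ c := fun ω => hce ▸ exp_div_mem_Icc hτ (hσ ω)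
  rw [hce] at hG hT
  have hlogT : Integrable (fun ω => log (exp (σ ω / τ) + T ω)) P :=
    integrable_log_of_mem_Icc (by fun_prop) (by positivity : 0 < c⁻¹ + m * c⁻¹)
      (.of_forall fun ω => ⟨add_le_add (hpos ω).1 (hT ω).1, add_le_add (hpos ω).2 (hT ω).2⟩)
  rw [infoNCE_gap_eq_integral (.of_mem_Icc (-1) 1 hσm.aemeasurable (.of_forall hσ))
    (integrable_log_of_mem_Icc hGm.aemeasurable (inv_pos.2 hc) hG) hlogT
    (fun ω => (mul_pos hm (inv_pos.2 hc)).le.trans (hT ω).1) hm.ne']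
  refine abs_integral_le_add_mul_integral_abs hΔ ?_
  filter_upwards [hG] with ω hGω
  rw [hc2]
  refine abs_log_sub_log_add_div_le hc hm hGω.1 ?_ (exp_pos _).le (hpos ω).2
  rw [le_div_iff₀ hm, mul_comm]
  exact (hT ω).1

theorem infoNCE_finite_negative_approximation_error_general
    (d : ℕ) (τ : ℝ) (hτ : 0 < τ)
    {Ω : Type*} [MeasurableSpace Ω] (P : Measure Ω) [IsProbabilityMeasure P]
    (U I : Ω → EuclideanSpace ℝ (Fin d)) (J : ℕ → Ω → EuclideanSpace ℝ (Fin d))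
    (hUm : Measurable U) (hIm : Measurable I) (hJm : ∀ n, Measurable (J n))
    (hU : ∀ ω, ‖U ω‖ = 1) (hI : ∀ ω, ‖I ω‖ = 1) (hJ : ∀ n ω, ‖J n ω‖ = 1)
    (ν : Measure (EuclideanSpace ℝ (Fin d))) [IsProbabilityMeasure ν]
    (hlaw : ∀ n, P.map (J n) = ν)
    (hiid : iIndepFun J P)
    (hindep : IndepFun (fun ω => (U ω, I ω)) (fun ω => (fun n => J n ω)) P)
    (M : ℕ) (hM : 1 ≤ M) :
    |(-(1 / τ) * (∫ ω, (inner ℝ (U ω) (I ω) : ℝ) ∂P)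
        + ∫ ω, log (∫ j, exp ((inner ℝ (U ω) j : ℝ) / τ) ∂ν) ∂P)
      - (-(∫ ω, log (exp ((inner ℝ (U ω) (I ω) : ℝ) / τ) /
            (exp ((inner ℝ (U ω) (I ω) : ℝ) / τ)
              + ∑ n ∈ Finset.range M, exp ((inner ℝ (U ω) (J n ω) : ℝ) / τ))) ∂P)
          - log M)|
    ≤ (1 / M) * exp (2 / τ)
      + exp (1 / τ) * (exp (1 / τ) - exp (-(1 / τ))) / (2 * Real.sqrt M) := by
  have hM0 : M ≠ 0 := by omega
  have hf : Measurable (uncurry fun u j : EuclideanSpace ℝ (Fin d) => exp (inner ℝ u j / τ)) := by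
    fun_prop
  have hindepU : IndepFun U (fun ω n => J n ω) P := hindep.comp measurable_fst measurable_id
  have hneg : ∀ n ω, exp (inner ℝ (U ω) (J n ω) / τ) ∈ Icc (exp (-(1 / τ))) (exp (1 / τ)) :=
    fun n ω => exp_div_mem_Icc hτ (real_inner_mem_Icc_of_norm_eq_one (hU ω) (hJ n ω))
  have hUJ : IndepFun U (J 0) P := hindepU.comp measurable_id (measurable_pi_apply 0)
  have hg : ∀ᵐ ω ∂P,
      ∫ j, exp (inner ℝ (U ω) j / τ) ∂ν ∈ Icc (exp (-(1 / τ))) (exp (1 / τ)) := by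
    simpa only [hlaw 0] using hUJ.ae_integral_mem_Icc hUm (hJm 0) hf (hneg 0)
  refine (abs_infoNCE_gap_le hτ (by positivity) (by fun_prop)
    (fun ω => real_inner_mem_Icc_of_norm_eq_one (hU ω) (hI ω))
    (hf.stronglyMeasurable.integral_prod_right.measurable.comp hUm) hg (by fun_prop)
    (fun ω => sum_range_mem_Icc M fun n => hneg n ω)
    (integrable_sum_div_sub_integral hUm hJm hlaw hindepU hf hneg hM0)).trans ?_
  rw [mul_div_assoc]
  gcongr
  exact integral_abs_sum_div_sub_integral_le hUm hJm hlaw hiid hindepU hf hneg hM0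

/-- Theorem 2 of the paper, with the O(M^{-1/2}) term explicit: the
approximation error of the normalized finite-negative InfoNCE loss L̃(M) relative to its
full-distribution limit L̃(∞) = −(1/τ)E[s(U,I)] + E[log g(U)] is at most
e^{2/τ}/M + e^{1/τ}(e^{1/τ} − e^{−1/τ})/(2√M). -/
theorem infoNCE_finite_negative_approximation_error
    (d : ℕ) (hd : 1 ≤ d) (τ : ℝ) (hτ : 0 < τ)
    {Ω : Type*} [MeasurableSpace Ω] (P : Measure Ω) [IsProbabilityMeasure P]
    (U I : Ω → EuclideanSpace ℝ (Fin d)) (J : ℕ → Ω → EuclideanSpace ℝ (Fin d))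
    (hUm : Measurable U) (hIm : Measurable I) (hJm : ∀ n, Measurable (J n))
    (hU : ∀ ω, ‖U ω‖ = 1) (hI : ∀ ω, ‖I ω‖ = 1) (hJ : ∀ n ω, ‖J n ω‖ = 1)
    (ν : Measure (EuclideanSpace ℝ (Fin d))) [IsProbabilityMeasure ν]
    (hlaw : ∀ n, P.map (J n) = ν)
    (hiid : iIndepFun J P)
    (hindep : IndepFun (fun ω => (U ω, I ω)) (fun ω => (fun n => J n ω)) P)
    (M : ℕ) (hM : 1 ≤ M) :
    |(-(1 / τ) * (∫ ω, (inner ℝ (U ω) (I ω) : ℝ) ∂P)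
        + ∫ ω, log (∫ j, exp ((inner ℝ (U ω) j : ℝ) / τ) ∂ν) ∂P)
      - (-(∫ ω, log (exp ((inner ℝ (U ω) (I ω) : ℝ) / τ) /
            (exp ((inner ℝ (U ω) (I ω) : ℝ) / τ)
              + ∑ n ∈ Finset.range M, exp ((inner ℝ (U ω) (J n ω) : ℝ) / τ))) ∂P)
          - log M)|
    ≤ (1 / M) * exp (2 / τ)
      + exp (1 / τ) * (exp (1 / τ) - exp (-(1 / τ))) / (2 * Real.sqrt M) :=
  infoNCE_finite_negative_approximation_error_general d τ hτ P U I J hUm hIm hJm hU hI hJ ν hlaw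
    hiid hindep M hM
end
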